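/- arXiv:2603.18772 — 2 statements merged into one kernel-verified Lean document; each statement's English description precedes it below -/
import Mathlib

section
/- Fix A^e = (A₁ᵉ, A₂ᵉ) ∈ ℝ² and α > 0 with α·|A^e| ≤ 1, where α = γ₁/κ₁ > 0. Consider the system of equations in (M₁,M₂,S₁,S₂,S₃) ∈ ℝ⁵ with |S| ≤ 1: (i) γ₁M₁ − κ₁S₁ = 0, γ₁M₂ − κ₁S₂ = 0; (ii) S₃(M₁+A₁ᵉ) = 0, S₃(M₂+A₂ᵉ) = 0, S₁(M₁+A₁ᵉ) + S₂(M₂+A₂ᵉ) = 0. Then the solution set equals Z₁ ∪ Z₂, where Z₁ = {(M,S) : |M + A^e/2| = |A^e|/2, S₁ = αM₁, S₂ = αM₂, S₃ = 0, |S| ≤ 1} and Z₂ = {(M,S) : M = −A^e, S₁ = −αA₁ᵉ, S₂ = −αA₂ᵉ, S₃ ∈ ℝ, |S| ≤ 1}. -/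
/-- The stationary states of the averaged Maxwell–Bloch system form the union
`Z₁ ∪ Z₂`. -/
theorem stmt10 (A₁ A₂ γ₁ κ₁ α : ℝ) (hγ₁ : 0 < γ₁) (hκ₁ : 0 < κ₁)
    (hα : α = γ₁ / κ₁) (hαA : α * Real.sqrt (A₁ ^ 2 + A₂ ^ 2) ≤ 1) :
    {p : (ℝ × ℝ) × ℝ × ℝ × ℝ |
        Real.sqrt (p.2.1 ^ 2 + p.2.2.1 ^ 2 + p.2.2.2 ^ 2) ≤ 1 ∧
        γ₁ * p.1.1 - κ₁ * p.2.1 = 0 ∧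
        γ₁ * p.1.2 - κ₁ * p.2.2.1 = 0 ∧
        p.2.2.2 * (p.1.1 + A₁) = 0 ∧
        p.2.2.2 * (p.1.2 + A₂) = 0 ∧
        p.2.1 * (p.1.1 + A₁) + p.2.2.1 * (p.1.2 + A₂) = 0}
    = {p : (ℝ × ℝ) × ℝ × ℝ × ℝ |
        Real.sqrt ((p.1.1 + A₁ / 2) ^ 2 + (p.1.2 + A₂ / 2) ^ 2)
          = Real.sqrt (A₁ ^ 2 + A₂ ^ 2) / 2 ∧
        p.2.1 = α * p.1.1 ∧ p.2.2.1 = α * p.1.2 ∧ p.2.2.2 = 0 ∧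
        Real.sqrt (p.2.1 ^ 2 + p.2.2.1 ^ 2 + p.2.2.2 ^ 2) ≤ 1}
    ∪ {p : (ℝ × ℝ) × ℝ × ℝ × ℝ |
        p.1 = (-A₁, -A₂) ∧ p.2.1 = -(α * A₁) ∧ p.2.2.1 = -(α * A₂) ∧
        Real.sqrt (p.2.1 ^ 2 + p.2.2.1 ^ 2 + p.2.2.2 ^ 2) ≤ 1} := by
  have hκ : κ₁ ≠ 0 := ne_of_gt hκ₁
  have key : ∀ M₁ M₂ : ℝ,
      Real.sqrt ((M₁ + A₁ / 2) ^ 2 + (M₂ + A₂ / 2) ^ 2)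
        = Real.sqrt (A₁ ^ 2 + A₂ ^ 2) / 2 ↔
      (M₁ + A₁ / 2) ^ 2 + (M₂ + A₂ / 2) ^ 2 = (A₁ ^ 2 + A₂ ^ 2) / 4 := by
    intro M₁ M₂
    have h4 : Real.sqrt (A₁ ^ 2 + A₂ ^ 2) / 2
        = Real.sqrt ((A₁ ^ 2 + A₂ ^ 2) / 4) := by
      rw [show (A₁ ^ 2 + A₂ ^ 2) / 4 = (A₁ ^ 2 + A₂ ^ 2) / 2 ^ 2 by ring,
        Real.sqrt_div (by positivity), Real.sqrt_sq (by norm_num)]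
    rw [h4, Real.sqrt_inj (by positivity) (by positivity)]
  ext ⟨⟨M₁, M₂⟩, S₁, S₂, S₃⟩
  simp only [Set.mem_setOf_eq, Set.mem_union, Prod.mk.injEq]
  constructor
  · rintro ⟨hS, h1, h2, h3, h4, h5⟩
    have hS₁ : S₁ = α * M₁ := by rw [hα]; field_simp; linarith
    have hS₂ : S₂ = α * M₂ := by rw [hα]; field_simp; linarith
    rcases eq_or_ne S₃ 0 with h0 | h0
    · left
      refine ⟨(key M₁ M₂).2 ?_, hS₁, hS₂, h0, hS⟩
      have hα0 : (0:ℝ) < α := hα ▸ div_pos hγ₁ hκ₁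
      have : α * ((M₁ + A₁ / 2) ^ 2 + (M₂ + A₂ / 2) ^ 2 - (A₁ ^ 2 + A₂ ^ 2) / 4) = 0 := by
        rw [hS₁, hS₂] at h5; nlinarith [h5]
      have := mul_eq_zero.1 this
      rcases this with h | h
      · exact absurd h (ne_of_gt hα0)
      · linarith
    · right
      have hM₁ : M₁ = -A₁ := by
        have := mul_eq_zero.1 h3
        rcases this with h | h
        · exact absurd h h0
        · linarith
      have hM₂ : M₂ = -A₂ := by
        have := mul_eq_zero.1 h4
        rcases this with h | h
        · exact absurd h h0
        · linarith
      refine ⟨⟨hM₁, hM₂⟩, ?_, ?_, hS⟩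
      · rw [hS₁, hM₁]; ring
      · rw [hS₂, hM₂]; ring
  · rintro (⟨hcirc, hS₁, hS₂, hS₃, hS⟩ | ⟨⟨hM₁, hM₂⟩, hS₁, hS₂, hS⟩)
    · have hc := (key M₁ M₂).1 hcirc
      refine ⟨hS, ?_, ?_, by rw [hS₃]; ring, by rw [hS₃]; ring, ?_⟩
      · rw [hS₁, hα]; field_simp; ring
      · rw [hS₂, hα]; field_simp; ring
      · rw [hS₁, hS₂]; linear_combination α * hc
    · refine ⟨hS, ?_, ?_, ?_, ?_, ?_⟩ <;>
        simp [hM₁, hM₂, hS₁, hS₂, hα] <;> field_simp <;> ring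
end

section
/- Let J be the 5×5 real matrix (1/2)·[[−γ₁,0,κ₁,0,0],[0,−γ₁,0,κ₁,0],[−bS₃,0,0,0,0],[0,−bS₃,0,0,0],[bS₁,bS₂,0,0,0]] with γ₁, κ₁, b > 0, S₁,S₂,S₃ ∈ ℝ. Then det(2J − λI) = −λ(λ² + λγ₁ + bκ₁S₃)², so the eigenvalues of 2J are 0 and the two roots of λ² + γ₁λ + bκ₁S₃ = 0, each with algebraic multiplicity 2. -/
/-!
The last column of `2J - λI` is `-λ e₅`, so its determinant is `-λ` times that of the leading
`4 × 4` block. That block is, up to reindexing, the Kronecker product `N ⊗ I₂` with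
`N = [[-γ₁ - λ, κ₁], [-bS₃, -λ]]`, whose determinant is `(det N)² = (λ² + γ₁λ + bκ₁S₃)²`.
-/

open Matrix
open scoped Kronecker

theorem Matrix.det_eq_corner_mul_det_submatrix_castSucc {R : Type*} [CommRing R] {n : ℕ}
    (M : Matrix (Fin (n + 1)) (Fin (n + 1)) R)
    (hM : ∀ i : Fin n, M i.castSucc (Fin.last n) = 0) :
    M.det = M (Fin.last n) (Fin.last n) * (M.submatrix Fin.castSucc Fin.castSucc).det := by
  rw [det_succ_column M (Fin.last n), Fin.sum_univ_castSucc]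
  simp [hM, ← two_mul, pow_mul]

theorem Matrix.det_fin_four_scalar_blocks {R : Type*} [CommRing R] (a b c d : R) :
    !![a, 0, b, 0;
       0, a, 0, b;
       c, 0, d, 0;
       0, c, 0, d].det = (a * d - b * c) ^ 2 := by
  have hkron : !![a, 0, b, 0; 0, a, 0, b; c, 0, d, 0; 0, c, 0, d] =
      reindex finProdFinEquiv finProdFinEquiv (!![a, b; c, d] ⊗ₖ (1 : Matrix (Fin 2) (Fin 2) R)) := by
    ext i j
    fin_cases i <;> fin_cases j <;> simp [finProdFinEquiv, Fin.divNat, Fin.modNat]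
  rw [hkron, det_reindex_self, det_kronecker, det_fin_two_of]
  simp

theorem stmt14_general (γ₁ κ₁ b S₁ S₂ S₃ : ℝ)
    (J : Matrix (Fin 5) (Fin 5) ℝ)
    (hJ : J = (1/2 : ℝ) • !![-γ₁, 0, κ₁, 0, 0;
                             0, -γ₁, 0, κ₁, 0;
                             -(b * S₃), 0, 0, 0, 0;
                             0, -(b * S₃), 0, 0, 0;
                             b * S₁, b * S₂, 0, 0, 0]) :
    ∀ lam : ℝ, ((2 : ℝ) • J - lam • (1 : Matrix (Fin 5) (Fin 5) ℝ)).det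
      = -lam * (lam ^ 2 + lam * γ₁ + b * κ₁ * S₃) ^ 2 := by
  intro lam
  set A := (2 : ℝ) • J - lam • (1 : Matrix (Fin 5) (Fin 5) ℝ)
  have hA : A = !![-γ₁ - lam, 0, κ₁, 0, 0;
                   0, -γ₁ - lam, 0, κ₁, 0;
                   -(b * S₃), 0, -lam, 0, 0;
                   0, -(b * S₃), 0, -lam, 0;
                   b * S₁, b * S₂, 0, 0, -lam] := by
    ext i j
    fin_cases i <;> fin_cases j <;> simp [A, hJ, one_apply, sub_eq_add_neg]
  have hcol : ∀ i : Fin 4, A i.castSucc (Fin.last 4) = 0 := by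
    rw [hA]
    intro i
    fin_cases i <;> rfl
  have hcorner : A (Fin.last 4) (Fin.last 4) = -lam := by rw [hA]; rfl
  have hminor : A.submatrix Fin.castSucc Fin.castSucc =
      !![-γ₁ - lam, 0, κ₁, 0;
         0, -γ₁ - lam, 0, κ₁;
         -(b * S₃), 0, -lam, 0;
         0, -(b * S₃), 0, -lam] := by
    rw [hA]
    ext i j
    fin_cases i <;> fin_cases j <;> rfl
  rw [det_eq_corner_mul_det_submatrix_castSucc A hcol, hcorner, hminor,
    det_fin_four_scalar_blocks]
  ring

/-- Characteristic polynomial factorization at states in `Z₂`: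
`det(2J − λI) = −λ(λ² + λγ₁ + bκ₁S₃)²`. -/
theorem stmt14 (γ₁ κ₁ b S₁ S₂ S₃ : ℝ) (hγ₁ : 0 < γ₁) (hκ₁ : 0 < κ₁) (hb : 0 < b)
    (J : Matrix (Fin 5) (Fin 5) ℝ)
    (hJ : J = (1/2 : ℝ) • !![-γ₁, 0, κ₁, 0, 0;
                             0, -γ₁, 0, κ₁, 0;
                             -(b * S₃), 0, 0, 0, 0;
                             0, -(b * S₃), 0, 0, 0;
                             b * S₁, b * S₂, 0, 0, 0]) :
    ∀ lam : ℝ, ((2 : ℝ) • J - lam • (1 : Matrix (Fin 5) (Fin 5) ℝ)).det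
      = -lam * (lam ^ 2 + lam * γ₁ + b * κ₁ * S₃) ^ 2 :=
  stmt14_general γ₁ κ₁ b S₁ S₂ S₃ J hJ
end
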